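/- arXiv:0803.4500 — 5 statements merged into one kernel-verified Lean document; each statement's English description precedes it below -/
import Mathlib

section
/- Let M ≥ 1 and α ∈ ℂ with |α| ≤ 1. Define f(z) = z^M (z + α)/(z·conj(α) + 1) and g(z) = f(z⁻¹). Then every nonzero z ∈ ℂ satisfying f(z) = g(z) (and not a pole of either side) lies on the unit circle |z| = 1. -/
/-!
For `‖α‖ ≤ 1` the identity `‖w * conj α + 1‖² - ‖w + α‖² = (1 - ‖w‖²) (1 - ‖α‖²)` shows that the
Möbius map `w ↦ (w + α) / (w * conj α + 1)` does not increase norms below `1` and does not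
decrease them above `1`. Multiplying by `w ^ M` with `M ≥ 1` makes this strict, so `f(z)` and
`f(z⁻¹)` have norms on opposite sides of `1` unless `‖z‖ = 1`.
-/

open ComplexConjugate

noncomputable def betheFactor (M : ℕ) (α z : ℂ) : ℂ :=
  z ^ M * (z + α) / (z * conj α + 1)

lemma norm_mul_conj_add_one_sq_sub_norm_add_sq (w α : ℂ) :
    ‖w * conj α + 1‖ ^ 2 - ‖w + α‖ ^ 2 = (1 - ‖w‖ ^ 2) * (1 - ‖α‖ ^ 2) := by
  simp only [Complex.sq_norm, Complex.normSq_apply, Complex.mul_re, Complex.mul_im,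
    Complex.add_re, Complex.add_im, Complex.conj_re, Complex.conj_im, Complex.one_re,
    Complex.one_im]
  ring

section Mobius

variable {w α : ℂ}

lemma norm_add_le_norm_mul_conj_add_one (hα : ‖α‖ ≤ 1) (hw : ‖w‖ ≤ 1) :
    ‖w + α‖ ≤ ‖w * conj α + 1‖ := by
  have key := norm_mul_conj_add_one_sq_sub_norm_add_sq w α
  have hα2 : ‖α‖ ^ 2 ≤ 1 := pow_le_one₀ (norm_nonneg α) hα
  have hw2 : ‖w‖ ^ 2 ≤ 1 := pow_le_one₀ (norm_nonneg w) hw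
  refine (pow_le_pow_iff_left₀ (norm_nonneg _) (norm_nonneg _) two_ne_zero).mp ?_
  nlinarith

lemma norm_mul_conj_add_one_le_norm_add (hα : ‖α‖ ≤ 1) (hw : 1 ≤ ‖w‖) :
    ‖w * conj α + 1‖ ≤ ‖w + α‖ := by
  have key := norm_mul_conj_add_one_sq_sub_norm_add_sq w α
  have hα2 : ‖α‖ ^ 2 ≤ 1 := pow_le_one₀ (norm_nonneg α) hα
  have hw2 : 1 ≤ ‖w‖ ^ 2 := one_le_pow₀ hw
  refine (pow_le_pow_iff_left₀ (norm_nonneg _) (norm_nonneg _) two_ne_zero).mp ?_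
  nlinarith

end Mobius

section BetheFactor

variable {M : ℕ} {α z : ℂ}

lemma norm_betheFactor_lt_one (hM : 1 ≤ M) (hα : ‖α‖ ≤ 1) (hz : ‖z‖ < 1) :
    ‖betheFactor M α z‖ < 1 := by
  have hmob : ‖z + α‖ / ‖z * conj α + 1‖ ≤ 1 :=
    div_le_one_of_le₀ (norm_add_le_norm_mul_conj_add_one hα hz.le) (norm_nonneg _)
  calc ‖betheFactor M α z‖ = ‖z‖ ^ M * (‖z + α‖ / ‖z * conj α + 1‖) := by
        rw [betheFactor, norm_div, norm_mul, norm_pow, mul_div_assoc]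
    _ ≤ ‖z‖ ^ M := mul_le_of_le_one_right (by positivity) hmob
    _ < 1 := pow_lt_one₀ (norm_nonneg z) hz (by omega)

lemma one_lt_norm_betheFactor (hM : 1 ≤ M) (hα : ‖α‖ ≤ 1) (hz : 1 < ‖z‖)
    (hd : z * conj α + 1 ≠ 0) :
    1 < ‖betheFactor M α z‖ := by
  have hmob : 1 ≤ ‖z + α‖ / ‖z * conj α + 1‖ :=
    (one_le_div₀ (norm_pos_iff.mpr hd)).mpr (norm_mul_conj_add_one_le_norm_add hα hz.le)
  calc 1 < ‖z‖ ^ M := one_lt_pow₀ hz (by omega)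
    _ ≤ ‖z‖ ^ M * (‖z + α‖ / ‖z * conj α + 1‖) := le_mul_of_one_le_right (by positivity) hmob
    _ = ‖betheFactor M α z‖ := by
        rw [betheFactor, norm_div, norm_mul, norm_pow, mul_div_assoc]

end BetheFactor

/-- The Bethe ansatz equation `f(z) = g(z)` with
`f(z) = z^M (z+α)/(z·conj α + 1)` and `g(z) = f(z⁻¹)`, for `|α| ≤ 1`,
has all its (nonzero, non-pole) solutions on the unit circle. -/
theorem bethe_roots_on_unit_circle (M : ℕ) (hM : 1 ≤ M) (α : ℂ)
    (hα : ‖α‖ ≤ 1) (z : ℂ) (hz : z ≠ 0)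
    (hd1 : z * (starRingEnd ℂ) α + 1 ≠ 0)
    (hd2 : z⁻¹ * (starRingEnd ℂ) α + 1 ≠ 0)
    (heq : z ^ M * (z + α) / (z * (starRingEnd ℂ) α + 1)
        = (z⁻¹) ^ M * (z⁻¹ + α) / (z⁻¹ * (starRingEnd ℂ) α + 1)) :
    ‖z‖ = 1 := by
  change betheFactor M α z = betheFactor M α z⁻¹ at heq
  have hz0 : 0 < ‖z‖ := norm_pos_iff.mpr hz
  rcases lt_trichotomy ‖z‖ 1 with hlt | heq1 | hgt
  · have hinv : 1 < ‖z⁻¹‖ := by rw [norm_inv]; exact (one_lt_inv₀ hz0).mpr hlt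
    linarith [norm_betheFactor_lt_one hM hα hlt, one_lt_norm_betheFactor hM hα hinv hd2,
      congrArg norm heq]
  · exact heq1
  · have hinv : ‖z⁻¹‖ < 1 := by rw [norm_inv]; exact inv_lt_one_of_one_lt₀ hgt
    linarith [one_lt_norm_betheFactor hM hα hgt hd1, norm_betheFactor_lt_one hM hα hinv,
      congrArg norm heq]
end

section
/- For 0 < g < 1 and positive integer M, all roots z of the palindromic polynomial f(z) = z^{2M} + 1 + (1+g²)·∑_{m=1}^{M-1} z^{2m} lie on the unit circle. -/
/-!
Putting `w = z²`, the geometric sum turns `f(z) = 0` into `w ^ M * (w + g²) = g² * w + 1`.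
Since `‖g² w + 1‖² - ‖w + g²‖² = (1 - g⁴)(1 - ‖w‖²)`, the right-hand side is larger in norm than
`w + g²` exactly when `‖w‖ < 1`, while the factor `‖w‖ ^ M` pulls the other way; hence `‖w‖ = 1`.
-/

open Finset

theorem sub_one_mul_palindromic_sum {R : Type*} [CommRing R] (c w : R) {M : ℕ} (hM : 1 ≤ M) :
    (w - 1) * (w ^ M + 1 + (1 + c) * ∑ m ∈ Icc 1 (M - 1), w ^ m)
      = w ^ M * (w + c) - (c * w + 1) := by
  have hgeom : (∑ m ∈ Icc 1 (M - 1), w ^ m) * (w - 1) = w ^ M - w := by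
    rw [Icc_sub_one_right_eq_Ico_of_not_isMin (by rw [isMin_iff_eq_bot, Nat.bot_eq_zero]; omega), geom_sum_Ico_mul w hM, pow_one]
  linear_combination (1 + c) * hgeom

theorem Complex.sq_norm_mul_add_one_sub_sq_norm_add (c : ℝ) (w : ℂ) :
    ‖c * w + 1‖ ^ 2 - ‖w + c‖ ^ 2 = (1 - c ^ 2) * (1 - ‖w‖ ^ 2) := by
  simp only [Complex.sq_norm, Complex.normSq_apply, Complex.add_re, Complex.add_im,
    Complex.mul_re, Complex.mul_im, Complex.ofReal_re, Complex.ofReal_im, Complex.one_re,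
    Complex.one_im]
  ring

theorem Complex.norm_eq_one_of_pow_mul_add_eq {c : ℝ} (hc : c ^ 2 < 1) {w : ℂ} (M : ℕ)
    (h : w ^ M * (w + c) = c * w + 1) : ‖w‖ = 1 := by
  have hnorm : ‖w‖ ^ M * ‖w + c‖ = ‖c * w + 1‖ := by rw [← norm_pow, ← norm_mul, h]
  have hdiff := Complex.sq_norm_mul_add_one_sub_sq_norm_add c w
  have ha := norm_nonneg (w + c)
  rcases lt_trichotomy ‖w‖ 1 with hlt | heq | hgt
  · have hle : ‖c * w + 1‖ ≤ ‖w + c‖ := by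
      rw [← hnorm]; exact mul_le_of_le_one_left ha (pow_le_one₀ (norm_nonneg w) hlt.le)
    have hw2 : ‖w‖ ^ 2 < 1 := pow_lt_one₀ (norm_nonneg w) hlt two_ne_zero
    nlinarith [pow_le_pow_left₀ (norm_nonneg _) hle 2, mul_pos (sub_pos.2 hc) (sub_pos.2 hw2)]
  · exact heq
  · have hle : ‖w + c‖ ≤ ‖c * w + 1‖ := by
      rw [← hnorm]; exact le_mul_of_one_le_left ha (one_le_pow₀ hgt.le)
    have hw2 : 1 < ‖w‖ ^ 2 := one_lt_pow₀ hgt two_ne_zero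
    nlinarith [pow_le_pow_left₀ ha hle 2, mul_pos (sub_pos.2 hc) (sub_pos.2 hw2)]

/-- For `0 < g < 1`, all roots of the reduced palindromic Bethe polynomial
`z^{2M} + 1 + (1+g²)·∑_{m=1}^{M-1} z^{2m}` lie on the unit circle. -/
theorem reduced_palindromic_roots_on_unit_circle (M : ℕ) (hM : 1 ≤ M)
    (g : ℝ) (hg0 : 0 < g) (hg1 : g < 1) (z : ℂ)
    (hroot : z ^ (2 * M) + 1
      + (1 + (g : ℂ) ^ 2) * ∑ m ∈ Finset.Icc 1 (M - 1), z ^ (2 * m) = 0) :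
    ‖z‖ = 1 := by
  simp only [pow_mul] at hroot
  have hg4 : (g ^ 2) ^ 2 < 1 :=
    pow_lt_one₀ (sq_nonneg g) (pow_lt_one₀ hg0.le hg1 two_ne_zero) two_ne_zero
  have hw : ‖z ^ 2‖ = 1 := by
    refine Complex.norm_eq_one_of_pow_mul_add_eq hg4 M ?_
    push_cast
    linear_combination (sub_one_mul_palindromic_sum ((g : ℂ) ^ 2) (z ^ 2) hM).symm
      + (z ^ 2 - 1) * hroot
  rwa [norm_pow, pow_eq_one_iff_of_nonneg (norm_nonneg z) two_ne_zero] at hw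
end

section
/- Let M be odd and 0 ≤ g with g² ≠ (M+1)/(M−1). With U, V as above, set X⁺ = U* − ig V* and X⁻ = U − ig V. Then (X⁺)² = (X⁻)² = 0 and {X⁺, X⁻} = ((M+1)/2 − g²(M−1)/2)·1. In particular {X⁺, X⁻} = 0 precisely when g² = (M+1)/(M−1). -/
/-- `U = ∑_{x odd, 1 ≤ x ≤ M} (−1)^{(x−1)/2} c_x`. -/
noncomputable def Uop {A : Type*} [Ring A] [Algebra ℂ A] (M : ℕ) (c : ℕ → A) : A :=
  ∑ x ∈ (Finset.Icc 1 M).filter (fun x => Odd x), ((-1 : ℂ) ^ ((x - 1) / 2)) • c x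

/-- `V = ∑_{x even, 1 ≤ x ≤ M} (−1)^{x/2} c_x`. -/
noncomputable def Vop {A : Type*} [Ring A] [Algebra ℂ A] (M : ℕ) (c : ℕ → A) : A :=
  ∑ x ∈ (Finset.Icc 1 M).filter (fun x => Even x), ((-1 : ℂ) ^ (x / 2)) • c x

/-!
Both `X⁺` and `X⁻` are combinations `∑ aₓ • dₓ` with the same coefficients (`aₓ = ±1` on odd
sites, `∓ i g` on even ones), of `c*` and of `c` respectively. A combination of pairwise
anticommuting elements squares to zero, and the CAR give `{∑ aₓ c*ₓ, ∑ aₓ cₓ} = (∑ aₓ²) • 1`,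
where `aₓ² = 1` on the `(M + 1) / 2` odd sites and `aₓ² = -g²` on the `(M - 1) / 2` even ones.
-/

section Anticommuting

variable {ι R A : Type*} [Ring A]

theorem sum_smul_mul_self_eq_zero_of_anticomm [Field R] [NeZero (2 : R)] [Algebra R A]
    (s : Finset ι) (a : ι → R) (d : ι → A) (hd : ∀ x y, d x * d y + d y * d x = 0) :
    (∑ x ∈ s, a x • d x) * (∑ x ∈ s, a x • d x) = 0 := by
  rw [Finset.sum_mul_sum]
  simp only [smul_mul_smul_comm]
  refine (smul_eq_zero.mp ?_).resolve_left (two_ne_zero (α := R))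
  -- swapping the summation indices pairs each term with its anticommutator
  rw [two_smul]
  nth_rewrite 2 [Finset.sum_comm]
  simp only [← Finset.sum_add_distrib, mul_comm (a _) (a _), ← smul_add, hd, smul_zero,
    Finset.sum_const_zero]

theorem sum_smul_anticomm_sum_smul [DecidableEq ι] [CommRing R] [Algebra R A] (s : Finset ι)
    (a b : ι → R) (d e : ι → A) (hde : ∀ x y, d x * e y + e y * d x = if x = y then 1 else 0) :
    (∑ x ∈ s, a x • d x) * (∑ y ∈ s, b y • e y) + (∑ y ∈ s, b y • e y) * (∑ x ∈ s, a x • d x)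
      = (∑ x ∈ s, a x * b x) • (1 : A) := by
  have hterm : ∀ x y, (a x • d x) * (b y • e y) + (b y • e y) * (a x • d x)
      = if x = y then (a x * b x) • (1 : A) else 0 := by
    intro x y
    rw [smul_mul_smul_comm, smul_mul_smul_comm, mul_comm (b y), ← smul_add, hde]
    split_ifs <;> simp_all
  rw [Finset.sum_mul_sum, Finset.sum_mul_sum, Finset.sum_comm (s := s) (t := s)
    (f := fun y x => (b y • e y) * (a x • d x)), ← Finset.sum_add_distrib, Finset.sum_smul]
  refine Finset.sum_congr rfl fun x hx => ?_
  rw [← Finset.sum_add_distrib, Finset.sum_congr rfl fun y _ => hterm x y,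
    Finset.sum_ite_eq s x, if_pos hx]

end Anticommuting

theorem card_filter_odd_Icc_one (M : ℕ) : ((Finset.Icc 1 M).filter Odd).card = (M + 1) / 2 := by
  induction M with
  | zero => simp
  | succ n ih =>
    rw [← Finset.insert_Icc_right_eq_Icc_add_one (by omega), Finset.filter_insert]
    by_cases h : Odd (n + 1)
    · rw [if_pos h, Finset.card_insert_of_notMem (by simp), ih]
      obtain ⟨j, hj⟩ := h
      omega
    · rw [if_neg h, ih]
      rw [Nat.odd_iff] at h
      omega

theorem card_filter_not_odd_Icc_one (M : ℕ) :
    ((Finset.Icc 1 M).filter fun x => ¬Odd x).card = M / 2 := by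
  have := Finset.card_filter_add_card_filter_not (s := Finset.Icc 1 M) (p := Odd)
  rw [card_filter_odd_Icc_one, Nat.card_Icc] at this
  omega

noncomputable def oddEvenCoeff (t : ℂ) (x : ℕ) : ℂ :=
  if Odd x then (-1) ^ ((x - 1) / 2) else -t * (-1) ^ (x / 2)

theorem Uop_sub_smul_Vop {A : Type*} [Ring A] [Algebra ℂ A] (M : ℕ) (d : ℕ → A) (t : ℂ) :
    Uop M d - t • Vop M d = ∑ x ∈ Finset.Icc 1 M, oddEvenCoeff t x • d x := by
  simp only [Uop, Vop, Finset.sum_filter, Finset.smul_sum, ← Finset.sum_sub_distrib]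
  refine Finset.sum_congr rfl fun x _ => ?_
  by_cases h : Odd x
  · simp [oddEvenCoeff, h, Nat.not_even_iff_odd.mpr h]
  · simp [oddEvenCoeff, h, Nat.not_odd_iff_even.mp h, smul_smul, sub_eq_add_neg, neg_smul]

theorem oddEvenCoeff_mul_self (t : ℂ) (x : ℕ) :
    oddEvenCoeff t x * oddEvenCoeff t x = if Odd x then 1 else t ^ 2 := by
  have hsign : ∀ n : ℕ, (-1 : ℂ) ^ n * (-1) ^ n = 1 := fun n => by simp [← mul_pow]
  unfold oddEvenCoeff
  split_ifs
  · exact hsign _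
  · linear_combination t ^ 2 * hsign (x / 2)

theorem sum_oddEvenCoeff_mul_self (t : ℂ) (M : ℕ) :
    ∑ x ∈ Finset.Icc 1 M, oddEvenCoeff t x * oddEvenCoeff t x
      = ((M + 1) / 2 : ℕ) + t ^ 2 * (M / 2 : ℕ) := by
  simp only [oddEvenCoeff_mul_self, Finset.sum_ite, Finset.sum_const, card_filter_odd_Icc_one,
    card_filter_not_odd_Icc_one, nsmul_eq_mul, mul_one]
  ring

theorem central_charge_eq_zero_iff {m : ℝ} (hm : m ≠ 1) (g : ℝ) :
    ((m : ℂ) + 1) / 2 - (g : ℂ) ^ 2 * ((m : ℂ) - 1) / 2 = 0 ↔ g ^ 2 = (m + 1) / (m - 1) := by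
  rw [eq_div_iff (sub_ne_zero.mpr hm)]
  have : ((m : ℂ) + 1) / 2 - (g : ℂ) ^ 2 * ((m : ℂ) - 1) / 2
      = ((((m + 1) - g ^ 2 * (m - 1)) / 2 : ℝ) : ℂ) := by
    push_cast
    ring
  rw [this, Complex.ofReal_eq_zero]
  constructor <;> intro h <;> linarith

theorem gl11_odd_generators_general {A : Type*} [Ring A] [Algebra ℂ A] [Nontrivial A]
    (M : ℕ) (hM : Odd M) (hM1 : 1 < M) (g : ℝ)
    (c cdag : ℕ → A)
    (hcc : ∀ x y, c x * c y + c y * c x = 0)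
    (hdd : ∀ x y, cdag x * cdag y + cdag y * cdag x = 0)
    (hdc : ∀ x y, cdag x * c y + c y * cdag x = if x = y then 1 else 0) :
    (Uop M cdag - (Complex.I * g) • Vop M cdag) *
        (Uop M cdag - (Complex.I * g) • Vop M cdag) = 0 ∧
    (Uop M c - (Complex.I * g) • Vop M c) *
        (Uop M c - (Complex.I * g) • Vop M c) = 0 ∧
    (Uop M cdag - (Complex.I * g) • Vop M cdag) * (Uop M c - (Complex.I * g) • Vop M c)
        + (Uop M c - (Complex.I * g) • Vop M c) * (Uop M cdag - (Complex.I * g) • Vop M cdag)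
      = (((M : ℂ) + 1) / 2 - (g : ℂ) ^ 2 * ((M : ℂ) - 1) / 2) • (1 : A) ∧
    ((Uop M cdag - (Complex.I * g) • Vop M cdag) * (Uop M c - (Complex.I * g) • Vop M c)
        + (Uop M c - (Complex.I * g) • Vop M c) * (Uop M cdag - (Complex.I * g) • Vop M cdag)
      = 0 ↔ g ^ 2 = ((M : ℝ) + 1) / ((M : ℝ) - 1)) := by
  have hscalar : ∑ x ∈ Finset.Icc 1 M, oddEvenCoeff (Complex.I * g) x * oddEvenCoeff (Complex.I * g) x
      = ((M : ℂ) + 1) / 2 - (g : ℂ) ^ 2 * ((M : ℂ) - 1) / 2 := by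
    obtain ⟨k, rfl⟩ := hM
    rw [sum_oddEvenCoeff_mul_self, show (2 * k + 1 + 1) / 2 = k + 1 by omega,
      show (2 * k + 1) / 2 = k by omega]
    push_cast
    rw [mul_pow, Complex.I_sq]
    ring
  have hanti := sum_smul_anticomm_sum_smul (Finset.Icc 1 M)
    (oddEvenCoeff (Complex.I * g)) (oddEvenCoeff (Complex.I * g)) cdag c hdc
  rw [hscalar] at hanti
  simp only [Uop_sub_smul_Vop]
  refine ⟨sum_smul_mul_self_eq_zero_of_anticomm _ _ _ hdd,
    sum_smul_mul_self_eq_zero_of_anticomm _ _ _ hcc, hanti, ?_⟩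
  rw [hanti, smul_eq_zero_iff_left one_ne_zero]
  simpa only [Complex.ofReal_natCast] using
    central_charge_eq_zero_iff (m := M) (by exact_mod_cast hM1.ne') g

/-- For `M` odd, the gl(1|1) generators `X⁺ = U* − ig V*`, `X⁻ = U − ig V`
square to zero and have anticommutator `((M+1)/2 − g²(M−1)/2)·1`; the latter
vanishes precisely when `g² = (M+1)/(M−1)`. -/
theorem gl11_odd_generators {A : Type*} [Ring A] [Algebra ℂ A] [Nontrivial A]
    (M : ℕ) (hM : Odd M) (hM1 : 1 < M) (g : ℝ) (hg : 0 ≤ g)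
    (c cdag : ℕ → A)
    (hcc : ∀ x y, c x * c y + c y * c x = 0)
    (hdd : ∀ x y, cdag x * cdag y + cdag y * cdag x = 0)
    (hdc : ∀ x y, cdag x * c y + c y * cdag x = if x = y then 1 else 0) :
    (Uop M cdag - (Complex.I * g) • Vop M cdag) *
        (Uop M cdag - (Complex.I * g) • Vop M cdag) = 0 ∧
    (Uop M c - (Complex.I * g) • Vop M c) *
        (Uop M c - (Complex.I * g) • Vop M c) = 0 ∧
    (Uop M cdag - (Complex.I * g) • Vop M cdag) * (Uop M c - (Complex.I * g) • Vop M c)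
        + (Uop M c - (Complex.I * g) • Vop M c) * (Uop M cdag - (Complex.I * g) • Vop M cdag)
      = (((M : ℂ) + 1) / 2 - (g : ℂ) ^ 2 * ((M : ℂ) - 1) / 2) • (1 : A) ∧
    ((Uop M cdag - (Complex.I * g) • Vop M cdag) * (Uop M c - (Complex.I * g) • Vop M c)
        + (Uop M c - (Complex.I * g) • Vop M c) * (Uop M cdag - (Complex.I * g) • Vop M cdag)
      = 0 ↔ g ^ 2 = ((M : ℝ) + 1) / ((M : ℝ) - 1)) :=
  gl11_odd_generators_general M hM hM1 g c cdag hcc hdd hdc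
end

section
/- For M = 3, the non-Hermitian Hamiltonian H acting on (ℂ²)^{⊗3}, given in fermionic form by H = −(c₁*c₂ − c₁c₂*) − (c₂*c₃ − c₂c₃*) + ig(n₁ − n₃), is intertwined by the explicit block-diagonal matrix η with blocks: 1 on the S^z = ±3/2 sectors, and on each 3-dimensional S^z = ±1/2 sector (ordered basis of weight vectors) the matrix (1/(g²−2))·[[−2, −2ig, g²],[2ig, −(g²+2), −2ig],[g², 2ig, −2]]. That is, η H = H* η, η = η*, and η is positive definite for 0 ≤ g² < 2. -/
open Matrix ComplexOrder

/-- The non-Hermitian `M = 3` XX Hamiltonian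
`H = −(c₁*c₂ − c₁c₂*) − (c₂*c₃ − c₂c₃*) + ig(n₁ − n₃)` on `(ℂ²)^{⊗3}`,
written in the sector-ordered weight basis
`(+++, −++, +−+, ++−, −−+, −+−, +−−, −−−)`: it is block diagonal with
`0` on the `S^z = ±3/2` sectors and the tridiagonal block
`[[−ig,1,0],[1,0,1],[0,1,ig]]` on each `S^z = ±1/2` sector. -/
noncomputable def H3chain (g : ℝ) : Matrix (Fin 8) (Fin 8) ℂ :=
  !![0, 0, 0, 0, 0, 0, 0, 0;
     0, -(Complex.I * g), 1, 0, 0, 0, 0, 0;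
     0, 1, 0, 1, 0, 0, 0, 0;
     0, 0, 1, Complex.I * g, 0, 0, 0, 0;
     0, 0, 0, 0, -(Complex.I * g), 1, 0, 0;
     0, 0, 0, 0, 1, 0, 1, 0;
     0, 0, 0, 0, 0, 1, Complex.I * g, 0;
     0, 0, 0, 0, 0, 0, 0, 0]

/-- The quasi-Hermiticity operator `η` for the `M = 3` chain: `1` on the
`S^z = ±3/2` sectors and
`(1/(g²−2))·[[−2, −2ig, g²],[2ig, −(g²+2), −2ig],[g², 2ig, −2]]`
on each `S^z = ±1/2` sector. -/
noncomputable def eta3chain (g : ℝ) : Matrix (Fin 8) (Fin 8) ℂ :=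
  !![1, 0, 0, 0, 0, 0, 0, 0;
     0, -2 / ((g : ℂ) ^ 2 - 2), -(2 * Complex.I * g) / ((g : ℂ) ^ 2 - 2),
       (g : ℂ) ^ 2 / ((g : ℂ) ^ 2 - 2), 0, 0, 0, 0;
     0, 2 * Complex.I * g / ((g : ℂ) ^ 2 - 2), -((g : ℂ) ^ 2 + 2) / ((g : ℂ) ^ 2 - 2),
       -(2 * Complex.I * g) / ((g : ℂ) ^ 2 - 2), 0, 0, 0, 0;
     0, (g : ℂ) ^ 2 / ((g : ℂ) ^ 2 - 2), 2 * Complex.I * g / ((g : ℂ) ^ 2 - 2),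
       -2 / ((g : ℂ) ^ 2 - 2), 0, 0, 0, 0;
     0, 0, 0, 0, -2 / ((g : ℂ) ^ 2 - 2), -(2 * Complex.I * g) / ((g : ℂ) ^ 2 - 2),
       (g : ℂ) ^ 2 / ((g : ℂ) ^ 2 - 2), 0;
     0, 0, 0, 0, 2 * Complex.I * g / ((g : ℂ) ^ 2 - 2), -((g : ℂ) ^ 2 + 2) / ((g : ℂ) ^ 2 - 2),
       -(2 * Complex.I * g) / ((g : ℂ) ^ 2 - 2), 0;
     0, 0, 0, 0, (g : ℂ) ^ 2 / ((g : ℂ) ^ 2 - 2), 2 * Complex.I * g / ((g : ℂ) ^ 2 - 2),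
       -2 / ((g : ℂ) ^ 2 - 2), 0;
     0, 0, 0, 0, 0, 0, 0, 1]

/-!
`η` and `H` are block diagonal along the `S^z` sectors, of sizes `1, 3, 3, 1`, so everything
reduces to the `3 × 3` block on the `S^z = ±1/2` sectors. There the intertwining relation is a
direct computation, and completing the square, for `x = (u, v, w)`,
`xᴴ η x = |u + w|² / 2 + |(2 + g²)(u − w) + 4igv|² / (2(2 + g²)(2 − g²)) + (2 − g²)|v|² / (2 + g²)`,
writes the block of `η` as `Sᴴ D S` with `D` a positive diagonal matrix for `g² < 2` and
`det S = 2(2 + g²) ≠ 0`.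
-/

theorem Matrix.PosDef.fromBlocks_zero {m n R : Type*} [Fintype m] [Fintype n]
    [Ring R] [PartialOrder R] [StarRing R] [IsOrderedAddMonoid R]
    {A : Matrix m m R} {D : Matrix n n R} (hA : A.PosDef) (hD : D.PosDef) :
    (fromBlocks A 0 0 D).PosDef := by
  refine .of_dotProduct_mulVec_pos (hA.isHermitian.fromBlocks (by simp) hD.isHermitian)
    fun x hx => ?_
  obtain ⟨u, v, rfl⟩ : ∃ u v, x = Sum.elim u v := ⟨_, _, (Sum.elim_comp_inl_inr x).symm⟩
  simp only [fromBlocks_mulVec, zero_mulVec, add_zero, zero_add, Function.star_sumElim,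
    Sum.elim_comp_inl, Sum.elim_comp_inr, sumElim_dotProduct_sumElim]
  by_cases hu : u = 0
  · subst hu
    have hv : v ≠ 0 := by rintro rfl; exact hx Sum.elim_zero_zero
    simpa using hD.dotProduct_mulVec_pos hv
  · exact add_pos_of_pos_of_nonneg (hA.dotProduct_mulVec_pos hu)
      (hD.posSemidef.dotProduct_mulVec_nonneg v)

section SectorDiag

variable {R : Type*}

def sectorEquiv : (Fin 1 ⊕ Fin 3) ⊕ (Fin 3 ⊕ Fin 1) ≃ Fin 8 :=
  (finSumFinEquiv.sumCongr finSumFinEquiv).trans (finSumFinEquiv (m := 4) (n := 4))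

def sectorDiag [Zero R] (A : Matrix (Fin 1) (Fin 1) R) (B : Matrix (Fin 3) (Fin 3) R) :
    Matrix (Fin 8) (Fin 8) R :=
  (fromBlocks (fromBlocks A 0 0 B) 0 0 (fromBlocks B 0 0 A)).submatrix
    sectorEquiv.symm sectorEquiv.symm

theorem sectorDiag_mul [NonUnitalNonAssocSemiring R] (A A' : Matrix (Fin 1) (Fin 1) R)
    (B B' : Matrix (Fin 3) (Fin 3) R) :
    sectorDiag A B * sectorDiag A' B' = sectorDiag (A * A') (B * B') := by
  simp [sectorDiag, submatrix_mul_equiv, fromBlocks_multiply]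

theorem sectorDiag_conjTranspose [AddMonoid R] [StarAddMonoid R]
    (A : Matrix (Fin 1) (Fin 1) R) (B : Matrix (Fin 3) (Fin 3) R) :
    (sectorDiag A B)ᴴ = sectorDiag Aᴴ Bᴴ := by
  simp [sectorDiag, conjTranspose_submatrix, fromBlocks_conjTranspose]

theorem sectorDiag_posDef [Ring R] [PartialOrder R] [StarRing R] [IsOrderedAddMonoid R]
    {A : Matrix (Fin 1) (Fin 1) R} {B : Matrix (Fin 3) (Fin 3) R} (hA : A.PosDef)
    (hB : B.PosDef) : (sectorDiag A B).PosDef :=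
  ((hA.fromBlocks_zero hB).fromBlocks_zero (hB.fromBlocks_zero hA)).submatrix
    sectorEquiv.symm.injective

end SectorDiag

noncomputable def eta3block (g : ℝ) : Matrix (Fin 3) (Fin 3) ℂ :=
  !![-2 / ((g : ℂ) ^ 2 - 2), -(2 * Complex.I * g) / ((g : ℂ) ^ 2 - 2),
       (g : ℂ) ^ 2 / ((g : ℂ) ^ 2 - 2);
     2 * Complex.I * g / ((g : ℂ) ^ 2 - 2), -((g : ℂ) ^ 2 + 2) / ((g : ℂ) ^ 2 - 2),
       -(2 * Complex.I * g) / ((g : ℂ) ^ 2 - 2);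
     (g : ℂ) ^ 2 / ((g : ℂ) ^ 2 - 2), 2 * Complex.I * g / ((g : ℂ) ^ 2 - 2),
       -2 / ((g : ℂ) ^ 2 - 2)]

noncomputable def H3block (g : ℝ) : Matrix (Fin 3) (Fin 3) ℂ :=
  !![-(Complex.I * g), 1, 0; 1, 0, 1; 0, 1, Complex.I * g]

theorem eta3chain_eq_sectorDiag (g : ℝ) : eta3chain g = sectorDiag 1 (eta3block g) := by
  ext i j
  fin_cases i <;> fin_cases j <;> rfl

theorem H3chain_eq_sectorDiag (g : ℝ) : H3chain g = sectorDiag 0 (H3block g) := by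
  ext i j
  fin_cases i <;> fin_cases j <;> rfl

theorem eta3block_mul_H3block (g : ℝ) :
    eta3block g * H3block g = (H3block g)ᴴ * eta3block g := by
  ext i j
  fin_cases i <;> fin_cases j <;>
    simp only [eta3block, H3block, mul_apply, Fin.sum_univ_three, conjTranspose_apply, of_apply,
      Fin.zero_eta, Fin.mk_one, Fin.reduceFinMk, Fin.isValue, cons_val', cons_val, cons_val_zero,
      cons_val_one, cons_val_fin_one, RCLike.star_def, map_neg, map_mul, map_one, map_zero,
      Complex.conj_I, Complex.conj_ofReal] <;>
    grind [Complex.I_sq]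

noncomputable def eta3blockFactor (g : ℝ) : Matrix (Fin 3) (Fin 3) ℂ :=
  !![1, 0, 1; 2 + (g : ℂ) ^ 2, 4 * Complex.I * g, -(2 + (g : ℂ) ^ 2); 0, 1, 0]

noncomputable def eta3blockWeights (g : ℝ) : Fin 3 → ℝ :=
  ![1 / 2, 1 / (2 * (2 + g ^ 2) * (2 - g ^ 2)), (2 - g ^ 2) / (2 + g ^ 2)]

theorem eta3block_eq_conjTranspose_mul_mul {g : ℝ} (hg : g ^ 2 ≠ 2) :
    eta3block g = (eta3blockFactor g)ᴴ *
      diagonal (fun i => (eta3blockWeights g i : ℂ)) * eta3blockFactor g := by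
  have h₁ : (g : ℂ) ^ 2 - 2 ≠ 0 := by exact_mod_cast sub_ne_zero.mpr hg
  have h₂ : (2 : ℂ) + (g : ℂ) ^ 2 ≠ 0 := by
    exact_mod_cast (by positivity : (2 : ℝ) + g ^ 2 ≠ 0)
  have h₃ : (2 : ℂ) - (g : ℂ) ^ 2 ≠ 0 := by exact_mod_cast sub_ne_zero.mpr (Ne.symm hg)
  ext i j
  fin_cases i <;> fin_cases j <;>
    simp only [eta3block, eta3blockFactor, eta3blockWeights, mul_apply, Fin.sum_univ_three,
      diagonal, mul_ite, mul_zero, Finset.sum_ite_eq', Finset.mem_univ, ↓reduceIte,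
      conjTranspose_apply, of_apply, Fin.zero_eta, Fin.mk_one, Fin.reduceFinMk, Fin.isValue,
      cons_val', cons_val, cons_val_zero, cons_val_one, cons_val_fin_one, RCLike.star_def,
      map_add, map_neg, map_mul, map_pow, map_one, map_zero, map_ofNat, Complex.conj_I,
      Complex.conj_ofReal, Complex.ofReal_div, Complex.ofReal_mul, Complex.ofReal_add,
      Complex.ofReal_sub, Complex.ofReal_pow, Complex.ofReal_one, Complex.ofReal_ofNat] <;>
    grind [Complex.I_sq]

theorem det_eta3blockFactor (g : ℝ) : (eta3blockFactor g).det = 2 * (2 + (g : ℂ) ^ 2) := by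
  simp only [eta3blockFactor, det_fin_three, of_apply, cons_val', cons_val, cons_val_zero,
    cons_val_one, cons_val_fin_one, Fin.isValue]
  ring

theorem eta3block_posDef {g : ℝ} (hg : g ^ 2 < 2) : (eta3block g).PosDef := by
  rw [eta3block_eq_conjTranspose_mul_mul hg.ne]
  have hweights : ∀ i, 0 < (eta3blockWeights g i : ℂ) := by
    have : 0 < 2 - g ^ 2 := by linarith
    have : 0 < 2 + g ^ 2 := by positivity
    intro i
    rw [Complex.zero_lt_real]
    fin_cases i <;>
      simp only [eta3blockWeights, Fin.zero_eta, Fin.mk_one, Fin.reduceFinMk, Fin.isValue,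
        cons_val, cons_val_zero, cons_val_one] <;>
      bound
  have hdet : IsUnit (eta3blockFactor g).det := by
    rw [det_eta3blockFactor, isUnit_iff_ne_zero]
    exact_mod_cast (by positivity : (2 : ℝ) * (2 + g ^ 2) ≠ 0)
  exact (PosDef.diagonal hweights).conjTranspose_mul_mul_same
    (mulVec_injective_of_isUnit ((isUnit_iff_isUnit_det _).mpr hdet))

/-- For `0 ≤ g² < 2` the matrix `η` intertwines `H` with its adjoint,
`η H = H* η`, is Hermitian, and is positive definite. -/
theorem eta3chain_quasiHermitian (g : ℝ) (hg : g ^ 2 < 2) :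
    eta3chain g * H3chain g = (H3chain g)ᴴ * eta3chain g ∧
    (eta3chain g).IsHermitian ∧ (eta3chain g).PosDef := by
  have hpos : (eta3chain g).PosDef := by
    rw [eta3chain_eq_sectorDiag]
    exact sectorDiag_posDef PosDef.one (eta3block_posDef hg)
  refine ⟨?_, hpos.isHermitian, hpos⟩
  rw [eta3chain_eq_sectorDiag, H3chain_eq_sectorDiag, sectorDiag_conjTranspose, sectorDiag_mul,
    sectorDiag_mul, eta3block_mul_H3block]
  simp
end

section
/- For M odd and real ε with |ε| < 2, writing ε = 2 cos ζ with ζ ∈ (0, π), the identity ∑_{k=0}^{m} ((−1)^{m+k} ε^{2k}/(2k+1)!)·[(m+1+k)!/(m−k)! − g²(m+k)!/(m−1−k)!] = 2·(sin((M+1)ζ) + g² sin((M−1)ζ))/(ε √(4−ε²)) holds, where m = (M−1)/2 and g is real. -/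
/-!
Since `(m+1+k)!/((2k+1)! (m-k)!) = C(m+1+k, 2k+1)`, the left side is `V_{m+1}(ε²) + g² V_m(ε²)`
for `V_n(E) = ∑_k (-1)^(n+1+k) C(n+k, 2k+1) E^k`. The second-difference identity for binomial
coefficients gives `V_{n+2} = (E - 2) V_{n+1} - V_n`, so `V_n(E) = S_{n-1}(E - 2)` with `S` the
rescaled Chebyshev polynomials of the second kind. At `E = ε² = 4 cos² ζ` this is
`S_{n-1}(2 cos 2ζ) = sin (2nζ) / sin 2ζ`, while `ε √(4 - ε²) = 4 cos ζ sin ζ = 2 sin 2ζ`.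
-/

open Finset Polynomial Polynomial.Chebyshev
open scoped Nat

lemma Nat.choose_add_two_add_choose (a r : ℕ) :
    (a + 2).choose (r + 2) + a.choose (r + 2) = a.choose r + 2 * (a + 1).choose (r + 2) := by
  rw [Nat.choose_succ_succ' (a + 1), Nat.choose_succ_succ' a (r + 1), Nat.choose_succ_succ' a r]
  ring

def vietaCoeff (n k : ℕ) : ℤ := (-1) ^ (n + 1 + k) * (n + k).choose (2 * k + 1)

lemma vietaCoeff_of_le {n k : ℕ} (h : n ≤ k) : vietaCoeff n k = 0 := by
  simp [vietaCoeff, Nat.choose_eq_zero_of_lt (by omega : n + k < 2 * k + 1)]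

lemma vietaCoeff_add_two_zero (n : ℕ) :
    vietaCoeff (n + 2) 0 + 2 * vietaCoeff (n + 1) 0 + vietaCoeff n 0 = 0 := by
  simp only [vietaCoeff, add_zero, mul_zero, zero_add, Nat.choose_one_right, pow_succ]
  push_cast
  ring

lemma vietaCoeff_add_two_succ (n k : ℕ) :
    vietaCoeff (n + 2) (k + 1) + 2 * vietaCoeff (n + 1) (k + 1) + vietaCoeff n (k + 1)
      = vietaCoeff (n + 1) k := by
  have h := Nat.choose_add_two_add_choose (n + k + 1) (2 * k + 1)
  simp only [vietaCoeff, show n + 2 + (k + 1) = n + k + 1 + 2 by ring,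
    show n + 1 + (k + 1) = n + k + 1 + 1 by ring, show n + (k + 1) = n + k + 1 by ring,
    show 2 * (k + 1) + 1 = 2 * k + 1 + 2 by ring, show n + 1 + k = n + k + 1 by ring]
  zify at h
  linear_combination (-1 : ℤ) ^ (n + k) * h

section

variable {R : Type*} [CommRing R]

def vietaSum (E : R) (n : ℕ) : R := ∑ k ∈ range n, (vietaCoeff n k : R) * E ^ k

lemma vietaSum_eq_sum_range {N n : ℕ} (h : n ≤ N) (E : R) :
    vietaSum E n = ∑ k ∈ range N, (vietaCoeff n k : R) * E ^ k := by
  refine sum_subset (range_subset_range.2 h) fun k _ hk => ?_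
  simp [vietaCoeff_of_le (not_lt.1 (mem_range.not.1 hk))]

lemma vietaSum_add_two (E : R) (n : ℕ) :
    vietaSum E (n + 2) = (E - 2) * vietaSum E (n + 1) - vietaSum E n := by
  have key : vietaSum E (n + 2) + 2 * vietaSum E (n + 1) + vietaSum E n
      = E * vietaSum E (n + 1) := by
    conv_rhs => rw [vietaSum, mul_sum]
    rw [vietaSum_eq_sum_range (N := n + 2) le_rfl,
      vietaSum_eq_sum_range (N := n + 2) (by omega), vietaSum_eq_sum_range (N := n + 2) (by omega),
      mul_sum, ← sum_add_distrib, ← sum_add_distrib, sum_range_succ']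
    simp only [← mul_assoc, ← add_mul, ← Int.cast_two (R := R), ← Int.cast_mul, ← Int.cast_add,
      vietaCoeff_add_two_succ, vietaCoeff_add_two_zero, pow_succ]
    rw [Int.cast_zero, zero_mul, add_zero]
    exact sum_congr rfl fun _ _ => by ring
  linear_combination key

lemma vietaSum_eq_S_eval (E : R) (n : ℕ) :
    vietaSum E n = (S R ((n : ℤ) - 1)).eval (E - 2) := by
  induction n using Nat.twoStepInduction with
  | zero => simp [vietaSum]
  | one => simp [vietaSum, vietaCoeff]
  | more n ih₀ ih₁ =>
    rw [vietaSum_add_two, ih₀, ih₁, show ((n + 2 : ℕ) : ℤ) - 1 = (n - 1) + 2 by push_cast; ring,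
      S_add_two]
    simp

end

lemma vietaSum_two_mul_cos_sq_mul_sin (θ : ℝ) (n : ℕ) :
    vietaSum ((2 * Real.cos θ) ^ 2) n * Real.sin (2 * θ) = Real.sin (2 * n * θ) := by
  rw [vietaSum_eq_S_eval, show (2 * Real.cos θ) ^ 2 - 2 = 2 * Real.cos (2 * θ) by
    rw [Real.cos_two_mul]; ring, S_two_mul_real_cos]
  push_cast
  congr 1
  ring

lemma Nat.cast_factorial_div_factorial_sub {K : Type*} [Field K] [CharZero K] {a b : ℕ}
    (h : b ≤ a) : (a ! : K) / (a - b)! = b ! * a.choose b := by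
  have : (b ! : K) ≠ 0 := Nat.cast_ne_zero.2 b.factorial_ne_zero
  rw [Nat.cast_choose K h]
  field_simp

lemma sum_factorial_eq_vietaSum {K : Type*} [Field K] [CharZero K] (ε g : K) (m : ℕ) :
    ∑ k ∈ Finset.range (m + 1),
      (-1 : K) ^ (m + k) * ε ^ (2 * k) / (Nat.factorial (2 * k + 1) : K) *
        ((Nat.factorial (m + 1 + k) : K) / (Nat.factorial (m - k) : K) -
          (if k < m then
            g ^ 2 * (Nat.factorial (m + k) : K) / (Nat.factorial (m - 1 - k) : K)
          else 0))
      = vietaSum (ε ^ 2) (m + 1) + g ^ 2 * vietaSum (ε ^ 2) m := by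
  rw [vietaSum_eq_sum_range (N := m + 1) m.le_succ, vietaSum, mul_sum, ← sum_add_distrib]
  refine sum_congr rfl fun k hk => ?_
  have hkm : k ≤ m := Nat.lt_succ_iff.1 (mem_range.1 hk)
  have h₁ : ((m + 1 + k) ! : K) / (m - k)! = (2 * k + 1)! * (m + 1 + k).choose (2 * k + 1) := by
    rw [← Nat.cast_factorial_div_factorial_sub (by omega),
      show m + 1 + k - (2 * k + 1) = m - k by omega]
  have h₂ : (if k < m then g ^ 2 * ((m + k) ! : K) / (m - 1 - k)! else 0)
      = g ^ 2 * ((2 * k + 1)! * (m + k).choose (2 * k + 1)) := by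
    split_ifs with hlt
    · rw [mul_div_assoc, ← Nat.cast_factorial_div_factorial_sub (by omega),
        show m + k - (2 * k + 1) = m - 1 - k by omega]
    · simp [Nat.choose_eq_zero_of_lt (by omega : m + k < 2 * k + 1)]
  have : ((2 * k + 1)! : K) ≠ 0 := Nat.cast_ne_zero.2 (2 * k + 1).factorial_ne_zero
  rw [h₁, h₂, vietaCoeff, vietaCoeff]
  push_cast
  field_simp
  ring

/-- For `M = 2m+1` odd and `ε = 2 cos ζ` with `ζ ∈ (0, π)`, `ε ≠ 0`, the
polynomial form of the reduced single-particle-energy polynomial equals its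
trigonometric form:
`∑_{k=0}^{m} (−1)^{m+k} ε^{2k}/(2k+1)!·[(m+1+k)!/(m−k)! − g²(m+k)!/(m−1−k)!]
 = 2(sin((M+1)ζ) + g² sin((M−1)ζ))/(ε √(4−ε²))`
(the `g²` term is absent for `k = m`, where `1/(m−1−k)! = 1/Γ(0) = 0`). -/
theorem Fodd_closed_form (M m : ℕ) (hM : M = 2 * m + 1) (g ζ ε : ℝ)
    (hζ0 : 0 < ζ) (hζπ : ζ < Real.pi) (hε : ε = 2 * Real.cos ζ) (hε0 : ε ≠ 0) :
    ∑ k ∈ Finset.range (m + 1),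
      (-1 : ℝ) ^ (m + k) * ε ^ (2 * k) / (Nat.factorial (2 * k + 1) : ℝ) *
        ((Nat.factorial (m + 1 + k) : ℝ) / (Nat.factorial (m - k) : ℝ) -
          (if k < m then
            g ^ 2 * (Nat.factorial (m + k) : ℝ) / (Nat.factorial (m - 1 - k) : ℝ)
          else 0))
      = 2 * (Real.sin ((M + 1) * ζ) + g ^ 2 * Real.sin ((M - 1) * ζ))
          / (ε * Real.sqrt (4 - ε ^ 2)) := by
  subst hM hε
  have hsin : 0 < Real.sin ζ := Real.sin_pos_of_pos_of_lt_pi hζ0 hζπ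
  have hsqrt : Real.sqrt (4 - (2 * Real.cos ζ) ^ 2) = 2 * Real.sin ζ := by
    rw [← Real.sqrt_sq (by positivity : 0 ≤ 2 * Real.sin ζ)]
    congr 1
    linear_combination -4 * Real.sin_sq_add_cos_sq ζ
  have hcos : Real.cos ζ ≠ 0 := right_ne_zero_of_mul hε0
  rw [sum_factorial_eq_vietaSum, hsqrt, show ((2 * m + 1 : ℕ) : ℝ) + 1 = 2 * (m + 1 : ℕ) by
    push_cast; ring, show ((2 * m + 1 : ℕ) : ℝ) - 1 = 2 * m by push_cast; ring,
    ← vietaSum_two_mul_cos_sq_mul_sin ζ (m + 1), ← vietaSum_two_mul_cos_sq_mul_sin ζ m,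
    Real.sin_two_mul]
  field_simp
end
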